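/- arXiv:1709.02872 — 5 statements merged into one kernel-verified Lean document; each statement's English description precedes it below -/
import Mathlib

section
/- Let x_1, ..., x_N be elements of a unital C*-algebra satisfying \sum_i x_i x_i* = \sum_i x_i* x_i = 1. Fix a permutation \sigma of {1,...,p} and exponent sequences e_1,...,e_p and f_1,...,f_p, where x^1 = x and x^* denotes the adjoint. Then the following are equivalent: (1) for all index tuples (i_1,...,i_p) in {1,...,N}^p, x_{i_1}^{e_1} ... x_{i_p}^{e_p} = x_{i_{\sigma(1)}}^{f_1} ... x_{i_{\sigma(p)}}^{f_p}; (2) \sum_{i_1,...,i_p} x_{i_1}^{e_1} ... x_{i_p}^{e_p} x_{i_{\sigma(p)}}^{\bar f_p} ... x_{i_{\sigma(1)}}^{\bar f_1} = 1, where \bar e denotes the involution swapping 1 and *. -/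
/-!
The words `Pᵢ = x_{i₁}^{e₁} ⋯ x_{i_p}^{e_p}` and `Qᵢ = x_{i_{σ(1)}}^{f₁} ⋯ x_{i_{σ(p)}}^{f_p}` both
satisfy `∑ᵢ PᵢPᵢ* = ∑ᵢ QᵢQᵢ* = 1`: peel off the first letter and use `∑ xx* = ∑ x*x = 1`.
The sum in (2) is `∑ᵢ PᵢQᵢ*`, so if it equals `1` then
`∑ᵢ (Pᵢ - Qᵢ)(Pᵢ - Qᵢ)* = 2 - ∑ᵢ PᵢQᵢ* - (∑ᵢ PᵢQᵢ*)* = 0`,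
and a vanishing sum of positive elements of a C*-algebra has vanishing terms.
-/

/-- `pw a e` is `a` when `e = true` and `star a` when `e = false`. -/
def pw {A : Type*} [Ring A] [StarRing A] (a : A) (e : Bool) : A :=
  if e then a else star a

open Finset

lemma star_pw {A : Type*} [Ring A] [StarRing A] (a : A) (e : Bool) :
    star (pw a e) = pw a (!e) := by
  cases e <;> simp [pw]

lemma star_prod_ofFn {M : Type*} [Monoid M] [StarMul M] :
    ∀ {n : ℕ} (g : Fin n → M),
      star (List.ofFn g).prod = (List.ofFn fun k => star (g k.rev)).prod
  | 0, _ => by simp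
  | n + 1, g => by
    rw [List.ofFn_succ, List.prod_cons, star_mul, star_prod_ofFn, List.ofFn_succ']
    simp [Fin.rev_castSucc, Fin.rev_last]

lemma sum_pw_mul_star_pw {A : Type*} [Ring A] [StarRing A] {ι : Type*} [Fintype ι]
    {x : ι → A} (h1 : ∑ i, x i * star (x i) = 1) (h2 : ∑ i, star (x i) * x i = 1) (e : Bool) :
    ∑ i, pw (x i) e * star (pw (x i) e) = 1 := by
  cases e
  · simpa [pw] using h2
  · simpa [pw] using h1

lemma sum_prod_ofFn_mul_star_eq_one {R : Type*} [Semiring R] [StarRing R]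
    {ι : Type*} [Fintype ι] :
    ∀ {p : ℕ} (y : Fin p → ι → R), (∀ k, ∑ a, y k a * star (y k a) = 1) →
      ∑ i : Fin p → ι, (List.ofFn fun k => y k (i k)).prod *
        star (List.ofFn fun k => y k (i k)).prod = 1
  | 0, _, _ => by simp
  | p + 1, y, hy => by
    have ih := sum_prod_ofFn_mul_star_eq_one (fun k => y k.succ) fun k => hy k.succ
    rw [← (Fin.consEquiv fun _ => ι).sum_comp, Fintype.sum_prod_type]
    calc _ = ∑ a, y 0 a * (∑ t : Fin p → ι, (List.ofFn fun k => y k.succ (t k)).prod *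
              star (List.ofFn fun k => y k.succ (t k)).prod) * star (y 0 a) := by
          simp [Fin.consEquiv, List.ofFn_succ, star_mul, mul_sum, sum_mul, mul_assoc]
      _ = 1 := by simpa [ih] using hy 0

lemma sum_mul_star_self_eq_zero_iff {A : Type*} [NonUnitalNormedRing A] [StarRing A]
    [CStarRing A] [PartialOrder A] [StarOrderedRing A] {ι : Type*} [Fintype ι] {a : ι → A} :
    ∑ i, a i * star (a i) = 0 ↔ ∀ i, a i = 0 := by
  simp [Fintype.sum_eq_zero_iff_of_nonneg fun i => mul_star_self_nonneg (a i), funext_iff]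

lemma forall_eq_iff_sum_mul_star_eq_one {A : Type*} [CStarAlgebra A] {ι : Type*} [Fintype ι]
    {P Q : ι → A} (hP : ∑ i, P i * star (P i) = 1) (hQ : ∑ i, Q i * star (Q i) = 1) :
    (∀ i, P i = Q i) ↔ ∑ i, P i * star (Q i) = 1 := by
  refine ⟨fun h => by simpa [h] using hQ, fun hPQ => ?_⟩
  have hQP : ∑ i, Q i * star (P i) = 1 := by
    simpa [star_sum, star_mul] using congrArg star hPQ
  have hsub : ∑ i, (P i - Q i) * star (P i - Q i) = 0 := by
    simp only [star_sub, mul_sub, sub_mul, sum_sub_distrib, hP, hQ, hPQ, hQP, sub_self]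
  let := CStarAlgebra.spectralOrder A
  have := CStarAlgebra.spectralOrderedRing A
  simpa [sub_eq_zero] using sum_mul_star_self_eq_zero_iff.mp hsub

/-- Proposition 6.1: for elements `x₁,…,x_N` of a unital C*-algebra with
`∑ xᵢxᵢ* = ∑ xᵢ*xᵢ = 1`, a permutation `σ ∈ S_p` and exponents `e, f`,
the relations
`x_{i₁}^{e₁} ⋯ x_{i_p}^{e_p} = x_{i_{σ(1)}}^{f₁} ⋯ x_{i_{σ(p)}}^{f_p}` (for all tuples `i`)
are equivalent to
`∑_{i₁…i_p} x_{i₁}^{e₁} ⋯ x_{i_p}^{e_p} x_{i_{σ(p)}}^{\bar f_p} ⋯ x_{i_{σ(1)}}^{\bar f_1} = 1`. -/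
theorem perm_relations_iff_sum_eq_one {A : Type*} [NormedRing A] [StarRing A] [CStarRing A]
    [CompleteSpace A] [NormedAlgebra ℂ A] [StarModule ℂ A]
    {N p : ℕ} (x : Fin N → A)
    (h1 : ∑ i, x i * star (x i) = 1) (h2 : ∑ i, star (x i) * x i = 1)
    (σ : Equiv.Perm (Fin p)) (e f : Fin p → Bool) :
    (∀ i : Fin p → Fin N,
      (List.ofFn fun k => pw (x (i k)) (e k)).prod
        = (List.ofFn fun k => pw (x (i (σ k))) (f k)).prod)
    ↔ ∑ i : Fin p → Fin N,
        (List.ofFn fun k => pw (x (i k)) (e k)).prod *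
          (List.ofFn fun k => pw (x (i (σ k.rev))) (!(f k.rev))).prod = 1 := by
  let : CStarAlgebra A := {}
  have hstar (i : Fin p → Fin N) :
      (List.ofFn fun k => pw (x (i (σ k.rev))) (!(f k.rev))).prod
        = star (List.ofFn fun k => pw (x (i (σ k))) (f k)).prod := by
    simp only [star_prod_ofFn, star_pw]
  simp only [hstar]
  have hletters (g : Fin p → Bool) k := sum_pw_mul_star_pw h1 h2 (g k)
  refine forall_eq_iff_sum_mul_star_eq_one (sum_prod_ofFn_mul_star_eq_one _ (hletters e)) ?_
  -- reindex the tuples by `i ↦ i ∘ σ`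
  exact ((σ.symm.arrowCongr (Equiv.refl (Fin N))).sum_comp _).trans
    (sum_prod_ofFn_mul_star_eq_one _ (hletters f))
end

section
/- Transposing two adjacent points of a perfect matching of {1,...,2n} that lie in different blocks changes the parity of the number of crossings of the matching. -/
/-!
Conjugating by `s = (m m+1)` only relabels the points, so the crossings of `s π s` are the
pairs `(x, y)` with `s x < s y < s (π x) < s (π y)`. Since `s` preserves every comparison except
the one between `m` and `m + 1`, a pair `(x, y)` can change its crossing status only if both `x`
and `y` lie in the blocks `{m, π m}` and `{m + 1, π (m + 1)}`. These two blocks cross in exactly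
one of the matchings `π` and `s π s`, so exactly one pair changes status, and the two crossing
numbers differ by an odd number.
-/

/-- The number of crossings of a perfect matching of `{1,…,k}`, encoded as a fixed-point-free
involution `π`: pairs of blocks `{a, π a}`, `{c, π c}` with `a < c < π a < π c`. -/
def crossings {k : ℕ} (π : Equiv.Perm (Fin k)) : ℕ :=
  (Finset.univ.filter fun q : Fin k × Fin k => q.1 < q.2 ∧ q.2 < π q.1 ∧ π q.1 < π q.2).card

open Equiv Finset

theorem card_filter_mod_two_ne_of_card_not_iff_eq_one {α : Type*} [Fintype α] {P Q : α → Prop}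
    [DecidablePred P] [DecidablePred Q] (h : #{a | ¬(P a ↔ Q a)} = 1) :
    #{a | P a} % 2 ≠ #{a | Q a} % 2 := by
  have hcount : #{a | P a} + #{a | Q a} = #{a | ¬(P a ↔ Q a)} + 2 * #{a | P a ∧ Q a} := by
    simp only [card_filter, mul_sum, ← sum_add_distrib]
    refine sum_congr rfl fun a _ => ?_
    by_cases hP : P a <;> by_cases hQ : Q a <;> simp [hP, hQ]
  omega

theorem crossings_conj {k : ℕ} (π τ : Perm (Fin k)) :
    crossings (τ * π * τ⁻¹) =
      #{q : Fin k × Fin k | τ q.1 < τ q.2 ∧ τ q.2 < τ (π q.1) ∧ τ (π q.1) < τ (π q.2)} := by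
  rw [crossings]
  refine (card_equiv (prodCongr τ τ) fun q => ?_).symm
  rw [mem_filter, mem_filter]
  simp

section CovBy

variable {α : Type*} [LinearOrder α] {m m' : α}

theorem swap_lt_swap_iff_of_covBy (hmm' : m ⋖ m') {a b : α}
    (h : (a ≠ m ∧ a ≠ m') ∨ (b ≠ m ∧ b ≠ m')) : swap m m' a < swap m m' b ↔ a < b := by
  have hother : ∀ c, c ≠ m → c ≠ m' → (c < m' ↔ c < m) ∧ (m < c ↔ m' < c) := fun c hcm hcm' =>
    ⟨by rw [hmm'.lt_iff_le_left, le_iff_lt_or_eq, or_iff_left hcm],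
      by rw [hmm'.lt_iff_le_right, le_iff_lt_or_eq, or_iff_left hcm'.symm]⟩
  rw [swap_apply_def, swap_apply_def]
  split_ifs <;> subst_vars <;> simp_all

theorem swap_chain_iff_of_covBy (hmm' : m ⋖ m') {a b c d : α}
    (h : (a ≠ m ∧ a ≠ m' ∧ c ≠ m ∧ c ≠ m') ∨ (b ≠ m ∧ b ≠ m' ∧ d ≠ m ∧ d ≠ m')) :
    (swap m m' a < swap m m' b ∧ swap m m' b < swap m m' c ∧ swap m m' c < swap m m' d) ↔
      (a < b ∧ b < c ∧ c < d) := by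
  rw [swap_lt_swap_iff_of_covBy hmm' (by tauto), swap_lt_swap_iff_of_covBy hmm' (by tauto),
    swap_lt_swap_iff_of_covBy hmm' (by tauto)]

end CovBy

section Switch

variable {k : ℕ} {m m' : Fin k} {π : Perm (Fin k)}

-- Given in the coordinates of `π`: where the two blocks cross in `s π s` instead, the crossing
-- pair there is the image of this one under `s = swap m m'`.
def flippedPair (m m' a b : Fin k) : Fin k × Fin k :=
  if a < m then
    if b < m then (if a < b then (a, b) else (b, a)) else (a, m')
  else
    if b < m then (b, m) else if a < b then (m, m') else (m', m)

theorem not_crossing_iff_swap_crossing_iff (hmm' : m ⋖ m')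
    (hinvm : π (π m) = m) (hinvm' : π (π m') = m') (hfixm : π m ≠ m) (hdiff : π m ≠ m')
    (hfixm' : π m' ≠ m') (x y : Fin k) :
    ¬((x < y ∧ y < π x ∧ π x < π y) ↔
      (swap m m' x < swap m m' y ∧ swap m m' y < swap m m' (π x) ∧
        swap m m' (π x) < swap m m' (π y))) ↔ (x, y) = flippedPair m m' (π m) (π m') := by
  have hm' : (m' : ℕ) = m + 1 := (Nat.covBy_iff_add_one_eq.1 (Fin.covBy_iff.1 hmm')).symm
  have hπm'_ne : π m' ≠ m := fun h => hdiff (by rw [← h, hinvm'])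
  have hπ : π m ≠ π m' := π.injective.ne hmm'.ne
  have hpartner {a : Fin k} (ha : π (π a) = a) (z : Fin k) : π z = a ↔ z = π a :=
    ⟨fun h => π.injective (h.trans ha.symm), fun h => h ▸ ha⟩
  by_cases hspecial :
      (x = m ∨ x = m' ∨ x = π m ∨ x = π m') ∧ (y = m ∨ y = m' ∨ y = π m ∨ y = π m')
  · obtain ⟨_ | _ | _ | _, _ | _ | _ | _⟩ := hspecial <;> subst x y <;>
      simp only [hinvm, hinvm', swap_apply_left, swap_apply_right,
        swap_apply_of_ne_of_ne hfixm hdiff, swap_apply_of_ne_of_ne hπm'_ne hfixm', flippedPair] <;>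
      split_ifs <;> simp only [Prod.mk.injEq, iff_true, true_and, and_true] <;> omega
  · rw [swap_chain_iff_of_covBy hmm' ?_]
    · simp only [not_true_eq_false, false_iff, flippedPair]
      split_ifs <;> simp only [Prod.mk.injEq] <;> omega
    · simp only [ne_eq, hpartner hinvm, hpartner hinvm']
      omega

theorem card_not_crossing_iff_swap_crossing_eq_one (hmm' : m ⋖ m')
    (hinvm : π (π m) = m) (hinvm' : π (π m') = m') (hfixm : π m ≠ m) (hdiff : π m ≠ m')
    (hfixm' : π m' ≠ m') :
    #{q : Fin k × Fin k | ¬((q.1 < q.2 ∧ q.2 < π q.1 ∧ π q.1 < π q.2) ↔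
      (swap m m' q.1 < swap m m' q.2 ∧ swap m m' q.2 < swap m m' (π q.1) ∧
        swap m m' (π q.1) < swap m m' (π q.2)))} = 1 :=
  card_eq_one.2 ⟨_, ext fun q => by
    simpa using not_crossing_iff_swap_crossing_iff hmm' hinvm hinvm' hfixm hdiff hfixm' q.1 q.2⟩

end Switch

/-- Transposing two adjacent points `m, m+1` of a perfect matching of `{1,…,2n}` that lie
in different blocks changes the parity of the number of crossings. -/
theorem switch_changes_crossing_parity {n : ℕ} (π : Equiv.Perm (Fin (2 * n)))
    (hinv : ∀ i, π (π i) = i) (hfix : ∀ i, π i ≠ i)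
    (m : Fin (2 * n)) (hm : (m : ℕ) + 1 < 2 * n)
    (hdiff : π m ≠ ⟨(m : ℕ) + 1, hm⟩) :
    crossings (Equiv.swap m ⟨(m : ℕ) + 1, hm⟩ * π * Equiv.swap m ⟨(m : ℕ) + 1, hm⟩) % 2
      ≠ crossings π % 2 := by
  set m' : Fin (2 * n) := ⟨(m : ℕ) + 1, hm⟩
  have hmm' : m ⋖ m' := Fin.covBy_iff.2 (Nat.covBy_iff_add_one_eq.2 rfl)
  have hconj := crossings_conj π (swap m m')
  rw [swap_inv] at hconj
  rw [hconj, crossings]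
  exact (card_filter_mod_two_ne_of_card_not_iff_eq_one
    (card_not_crossing_iff_swap_crossing_eq_one hmm' (hinv m) (hinv m') (hfix m) hdiff
      (hfix m'))).symm
end

section
/- If every block of a partition \pi of a finite set has even size, and \sigma is obtained from a noncrossing partition by merging blocks to produce \pi, with all blocks of the noncrossing partition of even size, then the signature \varepsilon(\pi) = 1. Concretely: for a partition of {1,...,2n} all of whose blocks have even size and which is obtained from a noncrossing even partition by merging some of its blocks, the minimal number of adjacent switches (of points in different blocks) needed to make it noncrossing is even. -/
/-- A partition (setoid) of `{1,…,n}` is noncrossing when there are no points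
`a < b < c < d` with `a ∼ c`, `b ∼ d`, but `a ≁ b`. -/
def NCross {n : ℕ} (π : Setoid (Fin n)) : Prop :=
  ¬ ∃ a b c d : Fin n, a < b ∧ b < c ∧ c < d ∧ π.r a c ∧ π.r b d ∧ ¬ π.r a b

/-- A switch: exchanging two adjacent points `m, m+1` lying in different blocks. -/
def SwitchStep {n : ℕ} (π π' : Setoid (Fin n)) : Prop :=
  ∃ (m : Fin n) (h : (m : ℕ) + 1 < n),
    ¬ π.r m ⟨(m : ℕ) + 1, h⟩ ∧ π' = Setoid.comap (Equiv.swap m ⟨(m : ℕ) + 1, h⟩) π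

/-- `ReachesNC π c` : `π` can be transformed into a noncrossing partition by `c` switches. -/
def ReachesNC {n : ℕ} (π : Setoid (Fin n)) (c : ℕ) : Prop :=
  ∃ f : Fin (c + 1) → Setoid (Fin n),
    f 0 = π ∧ NCross (f (Fin.last c)) ∧
      ∀ i : Fin c, SwitchStep (f i.castSucc) (f i.succ)

/-!
Colour every point by its block and count the pairs `x < y` whose colours are in increasing
order. A switch changes this count by exactly one. The count is even whenever the colouring is
constant on the blocks of a noncrossing partition with blocks of even size: two such blocks are
nested or side by side, so one of them has each of its points below all or none of the other
block. This applies to `π`, which merges `σ`, and to the noncrossing partition reached after `c`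
switches (switches preserve block sizes), so `c` is even.
-/

open Finset

section Colorings

variable {N : ℕ} {α : Type*} [LinearOrder α]

def nonInversions (χ : Fin N → α) : ℕ := #{p : Fin N × Fin N | p.1 < p.2 ∧ χ p.1 < χ p.2}

lemma Fin.swap_lt_swap_iff {m m' x y : Fin N} (hm : (m' : ℕ) = m + 1)
    (h₁ : ¬ (x = m ∧ y = m')) (h₂ : ¬ (x = m' ∧ y = m)) :
    Equiv.swap m m' x < Equiv.swap m m' y ↔ x < y := by
  simp only [Equiv.swap_apply_def, Fin.ext_iff, Fin.lt_def] at *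
  split_ifs <;> omega

lemma nonInversions_comp_swap {χ : Fin N → α} {m : Fin N} (h : (m : ℕ) + 1 < N)
    (hχ : χ m ≠ χ ⟨m + 1, h⟩) :
    nonInversions (χ ∘ Equiv.swap m ⟨m + 1, h⟩) % 2 = (nonInversions χ + 1) % 2 := by
  set m' : Fin N := ⟨m + 1, h⟩
  set s := Equiv.swap m m'
  have hmm' : m < m' := Fin.lt_def.2 (Nat.lt_succ_self _)
  have hs : nonInversions (χ ∘ s) = #{p : Fin N × Fin N | s p.1 < s p.2 ∧ χ p.1 < χ p.2} :=
    card_equiv (s.prodCongr s) (by simp [s, Equiv.swap_apply_self])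
  have hsm : s m = m' := Equiv.swap_apply_left m m'
  have hsm' : s m' = m := Equiv.swap_apply_right m m'
  have key : ∀ x y, ¬ (x = m ∧ y = m') → ¬ (x = m' ∧ y = m) → (s x < s y ↔ x < y) :=
    fun _ _ => Fin.swap_lt_swap_iff rfl
  rw [hs, nonInversions]
  rcases hχ.lt_or_gt with hlt | hlt
  · have hfilter : univ.filter (fun p : Fin N × Fin N => p.1 < p.2 ∧ χ p.1 < χ p.2) =
        insert (m, m') (univ.filter fun p : Fin N × Fin N => s p.1 < s p.2 ∧ χ p.1 < χ p.2) := by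
      ext ⟨x, y⟩
      simp only [mem_filter, mem_univ, true_and, mem_insert, Prod.mk.injEq]
      by_cases h₁ : x = m ∧ y = m'
      · obtain ⟨hx, hy⟩ := h₁; subst x y; simp [hmm', hlt]
      by_cases h₂ : x = m' ∧ y = m
      · obtain ⟨hx, hy⟩ := h₂; subst x y; simp [hlt.not_gt, hmm'.ne']
      simp [h₁, key x y h₁ h₂]
    rw [hfilter, card_insert_of_notMem (by simp [hsm, hsm', hmm'.not_gt])]
    omega
  · have hfilter : univ.filter (fun p : Fin N × Fin N => s p.1 < s p.2 ∧ χ p.1 < χ p.2) =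
        insert (m', m) (univ.filter fun p : Fin N × Fin N => p.1 < p.2 ∧ χ p.1 < χ p.2) := by
      ext ⟨x, y⟩
      simp only [mem_filter, mem_univ, true_and, mem_insert, Prod.mk.injEq]
      by_cases h₁ : x = m ∧ y = m'
      · obtain ⟨hx, hy⟩ := h₁; subst x y; simp [hlt.not_gt, hmm'.ne]
      by_cases h₂ : x = m' ∧ y = m
      · obtain ⟨hx, hy⟩ := h₂; subst x y; simp [hsm, hsm', hmm', hlt]
      simp [h₂, key x y h₁ h₂]
    rw [hfilter, card_insert_of_notMem (by simp [hmm'.not_gt])]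

end Colorings

lemma even_card_filter_of_forall_or_forall {γ : Type*} {s : Finset γ} {p : γ → Prop}
    [DecidablePred p] (hs : Even #s) (h : (∀ x ∈ s, p x) ∨ ∀ x ∈ s, ¬ p x) :
    Even #(s.filter p) := by
  rcases h with h | h
  · rwa [filter_true_of_mem h]
  · rw [filter_false_of_mem h, card_empty]; exact .zero

section PairCounts

variable {β : Type*} [LinearOrder β] {A B : Finset β}

lemma card_filter_lt_product_eq_sum_left :
    #{p ∈ A ×ˢ B | p.1 < p.2} = ∑ a ∈ A, #{b ∈ B | a < b} := by
  simp only [card_filter, sum_product]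

lemma card_filter_lt_product_eq_sum_right :
    #{p ∈ A ×ˢ B | p.1 < p.2} = ∑ b ∈ B, #{a ∈ A | a < b} := by
  simp only [card_filter, sum_product_right]

lemma even_card_filter_lt_product_left (hB : Even #B)
    (h : ∀ a ∈ A, (∀ b ∈ B, a < b) ∨ ∀ b ∈ B, ¬ a < b) : Even #{p ∈ A ×ˢ B | p.1 < p.2} := by
  rw [card_filter_lt_product_eq_sum_left]
  exact even_sum _ fun a ha => even_card_filter_of_forall_or_forall hB (h a ha)

lemma even_card_filter_lt_product_right (hA : Even #A)
    (h : ∀ b ∈ B, (∀ a ∈ A, a < b) ∨ ∀ a ∈ A, ¬ a < b) : Even #{p ∈ A ×ˢ B | p.1 < p.2} := by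
  rw [card_filter_lt_product_eq_sum_right]
  exact even_sum _ fun b hb => even_card_filter_of_forall_or_forall hA (h b hb)

end PairCounts

open Classical in
def EvenBlocks {N : ℕ} (π : Setoid (Fin N)) : Prop :=
  ∀ x, Even (Finset.univ.filter fun y => π.r x y).card

section Noncrossing

variable {N : ℕ} {σ : Setoid (Fin N)}

lemma NCross.separated (hσ : NCross σ) {a b : Fin N} (hab : ¬ σ.r a b) :
    (∀ x, σ.r a x → (∀ y, σ.r b y → x < y) ∨ ∀ y, σ.r b y → ¬ x < y) ∨
      ∀ y, σ.r b y → (∀ x, σ.r a x → x < y) ∨ ∀ x, σ.r a x → ¬ x < y := by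
  have hne : ∀ x y, σ.r a x → σ.r b y → ¬ σ.r x y := fun x y hx hy hxy =>
    hab (σ.trans' hx (σ.trans' hxy (σ.symm' hy)))
  by_contra hcon
  push Not at hcon
  obtain ⟨⟨x, hx, ⟨y₁, hy₁, hy₁x⟩, ⟨y₂, hy₂, hxy₂⟩⟩, ⟨y, hy, ⟨x₁, hx₁, hyx₁⟩, ⟨x₂, hx₂, hx₂y⟩⟩⟩ :=
    hcon
  have hy₁x : y₁ < x := hy₁x.lt_of_ne fun h => hne x y₁ hx hy₁ (h ▸ σ.refl' _)
  have hyx₁ : y < x₁ := hyx₁.lt_of_ne fun h => hne x₁ y hx₁ hy (h ▸ σ.refl' _)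
  rcases lt_or_gt_of_ne fun h : x = y => hne x y hx hy (h ▸ σ.refl' _) with hxy | hyx
  · exact hσ ⟨y₁, x, y, x₁, hy₁x, hxy, hyx₁, σ.trans' (σ.symm' hy₁) hy,
      σ.trans' (σ.symm' hx) hx₁, fun h => hne x y₁ hx hy₁ (σ.symm' h)⟩
  · exact hσ ⟨x₂, y, x, y₂, hx₂y, hyx, hxy₂, σ.trans' (σ.symm' hx₂) hx,
      σ.trans' (σ.symm' hy) hy₂, hne x₂ y hx₂ hy⟩

open Classical in
lemma NCross.even_card_filter_lt_product (hσ : NCross σ) (heven : EvenBlocks σ) {a b : Fin N}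
    (hab : ¬ σ.r a b) :
    Even #{p ∈ (univ.filter (σ.r a)) ×ˢ (univ.filter (σ.r b)) | p.1 < p.2} := by
  rcases hσ.separated hab with h | h
  · exact even_card_filter_lt_product_left (heven b) fun x hx =>
      (h x (by simpa using hx)).imp (fun h y hy => h y (by simpa using hy))
        (fun h y hy => h y (by simpa using hy))
  · exact even_card_filter_lt_product_right (heven a) fun y hy =>
      (h y (by simpa using hy)).imp (fun h x hx => h x (by simpa using hx))
        (fun h x hx => h x (by simpa using hx))

theorem NCross.even_nonInversions {α : Type*} [LinearOrder α] (hσ : NCross σ)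
    (heven : EvenBlocks σ) {χ : Fin N → α} (hχ : σ ≤ Setoid.ker χ) :
    Even (nonInversions χ) := by
  classical
  rw [nonInversions, card_eq_sum_card_fiberwise (t := univ)
    (f := fun p : Fin N × Fin N => ((⟦p.1⟧ : Quotient σ), (⟦p.2⟧ : Quotient σ)))
    fun _ _ => mem_univ _]
  refine even_sum _ fun ⟨A, B⟩ _ => ?_
  induction A, B using Quotient.inductionOn₂ with | h a b => ?_
  by_cases hab : χ a < χ b
  · refine (congrArg (fun s : Finset (Fin N × Fin N) => Even #s) (?_ : _ =
      {p ∈ (univ.filter (σ.r a)) ×ˢ (univ.filter (σ.r b)) | p.1 < p.2})).mpr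
      (hσ.even_card_filter_lt_product heven fun h => hab.ne (hχ h))
    ext ⟨x, y⟩
    simp only [mem_filter, mem_univ, true_and, mem_product, Prod.mk.injEq, Quotient.eq]
    constructor
    · rintro ⟨⟨hxy, -⟩, hxa, hyb⟩
      exact ⟨⟨σ.symm' hxa, σ.symm' hyb⟩, hxy⟩
    · rintro ⟨⟨hax, hby⟩, hxy⟩
      refine ⟨⟨hxy, ?_⟩, σ.symm' hax, σ.symm' hby⟩
      rwa [← (hχ hax : χ a = χ x), ← (hχ hby : χ b = χ y)]
  · rw [card_eq_zero.2]
    · exact .zero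
    · refine filter_eq_empty_iff.2 fun ⟨x, y⟩ hp hq => hab ?_
      simp only [mem_filter, mem_univ, true_and, Prod.mk.injEq, Quotient.eq] at hp hq
      rw [← (hχ hq.1 : χ x = χ a), ← (hχ hq.2 : χ y = χ b)]
      exact hp.2

end Noncrossing

section Switches

variable {N : ℕ} {π π' : Setoid (Fin N)} {α : Type*} [LinearOrder α]

lemma EvenBlocks.comap (hπ : EvenBlocks π) (g : Equiv.Perm (Fin N)) :
    EvenBlocks (Setoid.comap g π) := fun x => by
  classical
  convert hπ (g x) using 1
  exact card_equiv g fun y => by simp [Setoid.comap_rel]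

lemma SwitchStep.evenBlocks (h : SwitchStep π π') (hπ : EvenBlocks π) : EvenBlocks π' := by
  obtain ⟨m, hm, -, rfl⟩ := h
  exact hπ.comap _

lemma SwitchStep.exists_ker_eq {χ : Fin N → α} (h : SwitchStep π π') (hχ : Setoid.ker χ = π) :
    ∃ χ' : Fin N → α, Setoid.ker χ' = π' ∧
      nonInversions χ' % 2 = (nonInversions χ + 1) % 2 := by
  subst hχ
  obtain ⟨m, hm, hne, rfl⟩ := h
  exact ⟨χ ∘ Equiv.swap m ⟨m + 1, hm⟩, rfl, nonInversions_comp_swap hm hne⟩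

lemma ReachesNC.exists_ker_eq {c : ℕ} {χ : Fin N → α} (h : ReachesNC π c) (hπ : EvenBlocks π)
    (hχ : Setoid.ker χ = π) :
    ∃ (τ : Setoid (Fin N)) (χ' : Fin N → α), NCross τ ∧ EvenBlocks τ ∧ Setoid.ker χ' = τ ∧
      nonInversions χ' % 2 = (nonInversions χ + c) % 2 := by
  obtain ⟨f, rfl, hNC, hstep⟩ := h
  suffices ∀ i : Fin (c + 1), EvenBlocks (f i) ∧ ∃ χ' : Fin N → α, Setoid.ker χ' = f i ∧
      nonInversions χ' % 2 = (nonInversions χ + i) % 2 by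
    obtain ⟨heven, χ', hχ', hpar⟩ := this (Fin.last c)
    exact ⟨_, χ', hNC, heven, hχ', hpar⟩
  intro i
  induction i using Fin.induction with
  | zero => exact ⟨hπ, χ, hχ, rfl⟩
  | succ i ih =>
    obtain ⟨heven, χ', hχ', hpar⟩ := ih
    obtain ⟨χ'', hχ'', hpar'⟩ := (hstep i).exists_ker_eq hχ'
    refine ⟨(hstep i).evenBlocks heven, χ'', hχ'', ?_⟩
    rw [Fin.val_castSucc] at hpar
    rw [Fin.val_succ]
    omega

end Switches

lemma Setoid.ker_out_mk {β : Type*} (r : Setoid β) :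
    Setoid.ker (fun x => (Quotient.mk r x).out) = r := by
  ext x y
  rw [Setoid.ker_def, Quotient.out_inj, Quotient.eq]

open Classical in
/-- If `π` is a partition of `{1,…,2n}` with all blocks of even size, obtained from a
noncrossing partition `σ` with all blocks of even size by merging some of its blocks
(`σ ≤ π`), then the signature `ε(π) = 1`: the minimal number of adjacent switches needed to
make `π` noncrossing is even. -/
theorem epsilon_of_merged_noncrossing_even {n : ℕ} (π σ : Setoid (Fin (2 * n)))
    (hσNC : NCross σ)
    (hσeven : ∀ x, Even (Finset.univ.filter fun y => σ.r x y).card)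
    (hmerge : σ ≤ π)
    (hπeven : ∀ x, Even (Finset.univ.filter fun y => π.r x y).card)
    (c : ℕ) (hc : IsLeast {c | ReachesNC π c} c) : Even c := by
  obtain ⟨τ, χ, hτ, hτeven, hχ, hpar⟩ := hc.1.exists_ker_eq hπeven (Setoid.ker_out_mk π)
  have h₀ := hσNC.even_nonInversions hσeven (hmerge.trans (Setoid.ker_out_mk π).ge)
  have h₁ := hτ.even_nonInversions hτeven hχ.ge
  rw [Nat.even_iff] at h₀ h₁ ⊢
  omega
end

section
/- Let \Gamma be the quotient of the free group F_N by the relations abc = cba for all a, b, c in {g_1,...,g_N}. Then in \Gamma the elements g_i g_j^{-1} pairwise commute, and more generally any two products of generators of the same length commute up to the half-commutation relations; in particular the subgroup generated by all g_i g_1^{-1} is abelian. -/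
/-!
The relation `a a b = b a a` makes every square `g_a²` commute with every generator, so
`g_i g_j⁻¹ = (g_i g_j) (g_j²)⁻¹`. Products of two generators commute with each other,
`g_i g_j g_k g_l = g_k g_j g_i g_l = g_k g_l g_i g_j`, and the inverted squares commute with
everything in sight.
-/

/-- The half-commutation relations `g_i g_j g_k = g_k g_j g_i` in the free group on `N`
generators. -/
def halfRels (N : ℕ) : Set (FreeGroup (Fin N)) :=
  {x | ∃ i j k : Fin N,
    x = FreeGroup.of i * FreeGroup.of j * FreeGroup.of k *
      (FreeGroup.of k * FreeGroup.of j * FreeGroup.of i)⁻¹}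

def IsHalfCommuting {ι G : Type*} [Mul G] (x : ι → G) : Prop :=
  ∀ a b c, x a * x b * x c = x c * x b * x a

namespace IsHalfCommuting

variable {ι G : Type*} [Group G] {x : ι → G}

theorem commute_sq (hx : IsHalfCommuting x) (a b : ι) : Commute (x a ^ 2) (x b) := by
  simpa only [Commute, SemiconjBy, sq, mul_assoc] using hx a a b

theorem commute_mul_mul (hx : IsHalfCommuting x) (i j k l : ι) :
    Commute (x i * x j) (x k * x l) :=
  calc x i * x j * (x k * x l) = x k * (x j * x i * x l) := by rw [← mul_assoc, hx]; group
    _ = x k * x l * (x i * x j) := by rw [hx]; group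

theorem commute_mul_inv (hx : IsHalfCommuting x) (i j k l : ι) :
    Commute (x i * (x j)⁻¹) (x k * (x l)⁻¹) := by
  have hsq (a b c : ι) : Commute (x a ^ 2)⁻¹ (x b * x c) :=
    ((hx.commute_sq a b).mul_right (hx.commute_sq a c)).inv_left
  have hinv (a : ι) : (x a)⁻¹ = x a * (x a ^ 2)⁻¹ := by group
  rw [hinv, hinv, ← mul_assoc, ← mul_assoc]
  refine ((hx.commute_mul_mul i j k l).mul_right (hsq l i j).symm).mul_left ?_
  exact (hsq j k l).mul_right ((hx.commute_sq j l).pow_right 2).inv_inv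

end IsHalfCommuting

theorem isHalfCommuting_presentedGroup_of (N : ℕ) :
    IsHalfCommuting (PresentedGroup.of (rels := halfRels N)) := fun a b c =>
  PresentedGroup.mk_eq_mk_of_mul_inv_mem ⟨a, b, c, rfl⟩

/-- In the quotient `Γ = F_N / (abc = cba)` (the half-classical torus dual `Z^{∘N}`), the
elements `g_i g_j⁻¹` pairwise commute: for all `i, j, k, l`, `g_i g_j⁻¹` and `g_k g_l⁻¹`
commute. -/
theorem half_liberated_quotient_commute (N : ℕ) (i j k l : Fin N) :
    Commute
      (PresentedGroup.of (rels := halfRels N) i * (PresentedGroup.of (rels := halfRels N) j)⁻¹)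
      (PresentedGroup.of (rels := halfRels N) k * (PresentedGroup.of (rels := halfRels N) l)⁻¹) :=
  (isHalfCommuting_presentedGroup_of N).commute_mul_inv i j k l
end

section
/- For a perfect matching \pi of {1,...,2p} and the twisted map \bar T_\pi on (C^N)^{\otimes p} -> C defined using signed Kronecker symbols \bar\delta_\pi(i) = \varepsilon(\ker i) \delta_\pi(i) when \ker i \le \pi: if \pi is noncrossing, then \bar T_\pi = T_\pi, i.e., the twisted and untwisted maps coincide. -/
open Classical in
/-- The signature `ε(σ) ∈ {±1}` of a partition: `1` iff `σ` can be made noncrossing by an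
even number of adjacent switches. -/
noncomputable def epsilonSign {n : ℕ} (σ : Setoid (Fin n)) : ℤ :=
  if ∃ c, Even c ∧ ReachesNC σ c then 1 else -1

open Finset

theorem Finset.even_card_of_involution {ι : Type*} {s : Finset ι} (g : ∀ a ∈ s, ι)
    (hg_ne : ∀ a ha, g a ha ≠ a) (g_mem : ∀ a ha, g a ha ∈ s)
    (hg_invol : ∀ a ha, g (g a ha) (g_mem a ha) = a) : Even #s := by
  rw [← ZMod.natCast_eq_zero_iff_even, card_eq_sum_ones, Nat.cast_sum, Nat.cast_one]
  exact sum_involution g (fun _ _ => by decide) (fun a ha _ => hg_ne a ha) g_mem hg_invol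

section Inversions

variable {ι α : Type*} [Fintype ι] [LinearOrder ι] [LinearOrder α]

def inversions (f : ι → α) : Finset (ι × ι) :=
  {q | q.1 < q.2 ∧ f q.2 < f q.1}

@[simp]
theorem mem_inversions {f : ι → α} {q : ι × ι} :
    q ∈ inversions f ↔ q.1 < q.2 ∧ f q.2 < f q.1 := by
  simp [inversions]

theorem inversions_eq_empty_iff {f : ι → α} : inversions f = ∅ ↔ Monotone f := by
  simp only [eq_empty_iff_forall_notMem, mem_inversions, Prod.forall, not_and, not_lt]
  exact ⟨fun h x y hxy => hxy.eq_or_lt.elim (fun h' => h' ▸ le_rfl) (h x y),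
    fun h x y hxy => h hxy.le⟩

theorem even_card_inversions {f : ι → α} {π : ι → ι} (hinv : ∀ i, π (π i) = i)
    (hfix : ∀ i, π i ≠ i) (hNC : ¬ ∃ a c, a < c ∧ c < π a ∧ π a < π c)
    (hf : ∀ i, f (π i) = f i) : Even #(inversions f) := by
  have nested : ∀ q ∈ inversions f, ¬ q.1 < π q.2 →
      π q.2 < q.1 ∧ π q.1 < q.2 ∧ ¬ π q.1 < π q.2 := by
    rintro ⟨x, y⟩ hq hlt
    dsimp only at hlt ⊢
    obtain ⟨hxy, hfxy⟩ := mem_inversions.1 hq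
    have h1 : π y < x := (not_lt.1 hlt).lt_of_ne fun h => hfxy.ne (by rw [← h, hf])
    have h2 : π x < y := by
      refine lt_of_not_ge fun h => hNC ⟨π y, x, h1, by rwa [hinv], ?_⟩
      rw [hinv]; exact h.lt_of_ne fun h => hfxy.ne (by rw [h, hf])
    exact ⟨h1, h2, fun h => hNC ⟨π x, π y, h, by rwa [hinv], by rwa [hinv, hinv]⟩⟩
  refine even_card_of_involution
    (fun q _ => if q.1 < π q.2 then (q.1, π q.2) else (π q.1, q.2)) ?_ ?_ ?_
  · intro q _
    split_ifs <;> simp [Prod.ext_iff, hfix]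
  · intro q hq
    have := nested q hq
    split_ifs with h <;> simp_all
  · intro q hq
    have := nested q hq
    split_ifs <;> simp_all

end Inversions

section Switches

variable {n : ℕ} {α : Type*} [LinearOrder α]

theorem ReachesNC.zero {σ : Setoid (Fin n)} (h : NCross σ) : ReachesNC σ 0 :=
  ⟨fun _ => σ, rfl, h, fun i => i.elim0⟩

theorem ReachesNC.of_switchStep {σ σ' : Setoid (Fin n)} {c : ℕ} (hs : SwitchStep σ σ')
    (h : ReachesNC σ' c) : ReachesNC σ (c + 1) := by
  obtain ⟨f, hf0, hlast, hsteps⟩ := h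
  refine ⟨Fin.cons σ f, rfl, by simpa [← Fin.succ_last] using hlast, fun i => ?_⟩
  induction i using Fin.cases with
  | zero => simpa [hf0] using hs
  | succ j => simpa [← Fin.succ_castSucc] using hsteps j

theorem nCross_ker_of_monotone {f : Fin n → α} (hf : Monotone f) : NCross (Setoid.ker f) := by
  rintro ⟨a, b, c, d, hab, hbc, -, hac, -, hnab⟩
  exact hnab (le_antisymm (hf hab.le) (hac ▸ hf hbc.le))

theorem exists_descent_of_not_monotone {f : Fin n → α} (hf : ¬ Monotone f) :
    ∃ (m : Fin n) (h : (m : ℕ) + 1 < n), f ⟨(m : ℕ) + 1, h⟩ < f m := by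
  cases n with
  | zero => exact absurd (fun a => a.elim0) hf
  | succ n =>
    obtain ⟨i, hi⟩ := not_forall.1 (mt Fin.monotone_iff_le_succ.2 hf)
    exact ⟨i.castSucc, by simp, lt_of_not_ge hi⟩

theorem swap_lt_swap_iff_of_val_eq_succ {m m' x y : Fin n} (hm : (m' : ℕ) = m + 1) :
    Equiv.swap m m' x < Equiv.swap m m' y ↔
      x < y ∧ ¬ (x = m ∧ y = m') ∨ x = m' ∧ y = m := by
  simp only [Equiv.swap_apply_def, Fin.lt_def, Fin.ext_iff]
  split_ifs <;> omega

theorem card_inversions_comp_swap {f : Fin n → α} {m : Fin n} (h : (m : ℕ) + 1 < n)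
    (hd : f ⟨(m : ℕ) + 1, h⟩ < f m) :
    #(inversions (f ∘ Equiv.swap m ⟨(m : ℕ) + 1, h⟩)) + 1 = #(inversions f) := by
  set s := Equiv.swap m ⟨(m : ℕ) + 1, h⟩
  have hmap : (inversions (f ∘ s)).map (s.prodCongr s).toEmbedding
      = (inversions f).erase (m, ⟨(m : ℕ) + 1, h⟩) := by
    ext q
    rw [mem_map_equiv, mem_erase, mem_inversions, mem_inversions]
    simp only [Equiv.prodCongr_symm, Equiv.symm_swap, Equiv.prodCongr_apply, Prod.map_fst,
      Prod.map_snd, swap_lt_swap_iff_of_val_eq_succ, not_and,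
      Function.comp_apply, Equiv.swap_apply_self, ne_eq, s]
    constructor
    · rintro ⟨⟨hxy, hne⟩ | ⟨h1, h2⟩, hlt⟩
      · exact ⟨fun hq => hne (congrArg Prod.fst hq) (congrArg Prod.snd hq), hxy, hlt⟩
      · rw [h1, h2] at hlt; exact absurd (hlt.trans hd) (lt_irrefl _)
    · rintro ⟨hne, hxy, hlt⟩
      exact ⟨.inl ⟨hxy, fun h1 h2 => hne (Prod.ext h1 h2)⟩, hlt⟩
  have hmem : (m, ⟨(m : ℕ) + 1, h⟩) ∈ inversions f :=
    mem_inversions.2 ⟨Fin.lt_def.2 (by simp), hd⟩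
  rw [← card_map, hmap, card_erase_add_one hmem]

theorem switchStep_ker_comp_swap {f : Fin n → α} {m : Fin n} (h : (m : ℕ) + 1 < n)
    (hd : f ⟨(m : ℕ) + 1, h⟩ < f m) :
    SwitchStep (Setoid.ker f) (Setoid.ker (f ∘ Equiv.swap m ⟨(m : ℕ) + 1, h⟩)) :=
  ⟨m, h, fun hr => hd.ne hr.symm, rfl⟩

theorem reachesNC_ker (f : Fin n → α) : ReachesNC (Setoid.ker f) #(inversions f) := by
  induction hk : #(inversions f) generalizing f with
  | zero => exact .zero (nCross_ker_of_monotone (inversions_eq_empty_iff.1 (card_eq_zero.1 hk)))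
  | succ k ih =>
    obtain ⟨m, h, hd⟩ := exists_descent_of_not_monotone (f := f) fun hf => by
      simp [inversions_eq_empty_iff.2 hf] at hk
    exact .of_switchStep (switchStep_ker_comp_swap h hd)
      (ih _ (by have := card_inversions_comp_swap h hd; omega))

theorem epsilonSign_ker_eq_one {f : Fin n → α} {π : Fin n → Fin n} (hinv : ∀ i, π (π i) = i)
    (hfix : ∀ i, π i ≠ i) (hNC : ¬ ∃ a c, a < c ∧ c < π a ∧ π a < π c)
    (hf : ∀ i, f (π i) = f i) :
    epsilonSign (Setoid.ker f) = 1 :=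
  if_pos ⟨_, even_card_inversions hinv hfix hNC hf, reachesNC_ker f⟩

end Switches

/-- For a noncrossing perfect matching `π` of `{1,…,2p}` (a fixed-point-free involution with
no crossing), the twisted map `\bar T_π`, built from the signed Kronecker symbols
`\barδ_π(i) = ε(ker i) δ_π(i)`, coincides with the untwisted map `T_π`. -/
theorem twisted_eq_untwisted_of_noncrossing {p N : ℕ} (π : Equiv.Perm (Fin (2 * p)))
    (hinv : ∀ i, π (π i) = i) (hfix : ∀ i, π i ≠ i)
    (hNC : ¬ ∃ a c : Fin (2 * p), a < c ∧ c < π a ∧ π a < π c) :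
    (fun v : (Fin (2 * p) → Fin N) → ℂ =>
        ∑ i : Fin (2 * p) → Fin N,
          (if ∀ a, i (π a) = i a then (epsilonSign (Setoid.ker i) : ℂ) else 0) * v i)
      = fun v : (Fin (2 * p) → Fin N) → ℂ =>
          ∑ i : Fin (2 * p) → Fin N, (if ∀ a, i (π a) = i a then (1 : ℂ) else 0) * v i := by
  funext v
  refine sum_congr rfl fun i _ => ?_
  split_ifs with hi
  · rw [epsilonSign_ker_eq_one hinv hfix hNC hi, Int.cast_one]
  · rfl
end
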